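/- arXiv:1804.04720 — 6 statements merged into one kernel-verified Lean document; each statement's English description precedes it below -/
import Mathlib

section
/- Let n0, n1 be positive integers and let E0, E1, M0, M1, r be real numbers with M0 ≥ 0, M1 ≥ 0 and r ≥ 0. If E0 ≤ M0·(n0−1)/n0 − n0 + 1 and E1 ≤ M1·(n1−1)/n1 − n1 + 1, then E0 + (n0−1)·(r+1) + E1 + (n1−1)·(r+1) + r ≤ ((n0+n1−1)/(n0+n1))·(M0 + M1 + (n0+n1)·(r+1)) − n0 − n1 + 1. -/
/-- Inductive step of the proof that in a compacted binary trie the average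
length of the extents of internal nodes is at most the average string length
minus one. -/
theorem extents_inductive_step
    (n0 n1 : ℕ) (hn0 : 0 < n0) (hn1 : 0 < n1)
    (E0 E1 M0 M1 r : ℝ) (hM0 : 0 ≤ M0) (hM1 : 0 ≤ M1) (hr : 0 ≤ r)
    (h0 : E0 ≤ M0 * ((n0 : ℝ) - 1) / n0 - n0 + 1)
    (h1 : E1 ≤ M1 * ((n1 : ℝ) - 1) / n1 - n1 + 1) :
    E0 + ((n0 : ℝ) - 1) * (r + 1) + E1 + ((n1 : ℝ) - 1) * (r + 1) + r ≤
      (((n0 : ℝ) + n1 - 1) / ((n0 : ℝ) + n1)) *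
        (M0 + M1 + ((n0 : ℝ) + n1) * (r + 1)) - n0 - n1 + 1 := by
  set a : ℝ := (n0 : ℝ) with hadef
  set b : ℝ := (n1 : ℝ) with hbdef
  have ha : (1 : ℝ) ≤ a := by rw [hadef]; exact_mod_cast hn0
  have hb : (1 : ℝ) ≤ b := by rw [hbdef]; exact_mod_cast hn1
  have ha0 : (0 : ℝ) < a := by linarith
  have hb0 : (0 : ℝ) < b := by linarith
  have hab : (0 : ℝ) < a + b := by linarith
  have k0 : M0 * (a - 1) / a ≤ M0 * ((a + b - 1) / (a + b)) := by
    rw [mul_div_assoc]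
    apply mul_le_mul_of_nonneg_left _ hM0
    rw [div_le_div_iff₀ ha0 hab]
    nlinarith
  have k1 : M1 * (b - 1) / b ≤ M1 * ((a + b - 1) / (a + b)) := by
    rw [mul_div_assoc]
    apply mul_le_mul_of_nonneg_left _ hM1
    rw [div_le_div_iff₀ hb0 hab]
    nlinarith
  have expand : ((a + b - 1) / (a + b)) * (M0 + M1 + (a + b) * (r + 1)) =
      M0 * ((a + b - 1) / (a + b)) + M1 * ((a + b - 1) / (a + b)) +
        (a + b - 1) * (r + 1) := by
    field_simp
  rw [expand]
  linarith
end

section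
/- Let x ≤ y be positive integers and let i be the largest natural number such that some multiple of 2^i lies in the interval [x, y]. Then there is exactly one multiple m of 2^i in [x, y]; this m has 2-adic valuation exactly i, and every other element m' of [x, y] has 2-adic valuation strictly less than i. In particular m is the unique element of [x, y] of maximal 2-adic valuation (the 2-fattest number of [x, y]). -/
/-- Part (1) of the lemma on 2-fattest numbers: if `i` is the largest exponent
such that some multiple of `2^i` lies in the interval `[x, y]` of positive
integers, then that multiple `m` is unique, its 2-adic valuation is exactly
`i`, and every other element of `[x, y]` has strictly smaller 2-adic
valuation; i.e.\ `m` is the unique 2-fattest number of `[x, y]`. -/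
theorem two_fattest_exists_unique
    (x y i : ℕ) (hx : 0 < x) (hxy : x ≤ y)
    (hex : ∃ b, 2 ^ i * b ∈ Set.Icc x y)
    (hmax : ∀ j, (∃ b, 2 ^ j * b ∈ Set.Icc x y) → j ≤ i) :
    ∃ m ∈ Set.Icc x y, 2 ^ i ∣ m ∧ padicValNat 2 m = i ∧
      (∀ m' ∈ Set.Icc x y, 2 ^ i ∣ m' → m' = m) ∧
      (∀ m' ∈ Set.Icc x y, m' ≠ m → padicValNat 2 m' < i) := by
  obtain ⟨b, hb⟩ := hex
  -- no multiple of 2^(i+1) in [x,y]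
  have hno : ∀ c, 2 ^ (i + 1) * c ∉ Set.Icc x y := by
    intro c hc
    have := hmax (i + 1) ⟨c, hc⟩
    omega
  -- uniqueness of multiples of 2^i in [x,y]
  have huniq : ∀ b b' : ℕ, 2 ^ i * b ∈ Set.Icc x y → 2 ^ i * b' ∈ Set.Icc x y → b = b' := by
    intro b b' hb hb'
    by_contra hne
    wlog hlt : b < b' generalizing b b'
    · exact this b' b hb' hb (Ne.symm hne) (by omega)
    -- then 2^i*(b+1) ∈ [x,y]
    have h1 : 2 ^ i * (b + 1) ∈ Set.Icc x y := by
      simp only [Set.mem_Icc] at *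
      constructor
      · exact le_trans hb.1 (Nat.mul_le_mul_left _ (by omega))
      · exact le_trans (Nat.mul_le_mul_left _ (by omega)) hb'.2
    rcases Nat.even_or_odd b with ⟨d, hd⟩ | ⟨d, hd⟩
    · exact hno d (by rw [show 2 ^ (i+1) * d = 2 ^ i * b by rw [hd]; ring]; exact hb)
    · exact hno (d + 1)
        (by rw [show 2 ^ (i+1) * (d+1) = 2 ^ i * (b+1) by rw [hd]; ring]; exact h1)
  refine ⟨2 ^ i * b, hb, ⟨b, rfl⟩, ?_, ?_, ?_⟩
  · -- valuation exactly i
    have hm0 : 2 ^ i * b ≠ 0 := by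
      have := hb.1; intro h; rw [h] at this; omega
    have hle : i ≤ padicValNat 2 (2 ^ i * b) :=
      (padicValNat_dvd_iff_le hm0).mp ⟨b, rfl⟩
    rcases Nat.lt_or_ge (padicValNat 2 (2 ^ i * b)) (i + 1) with h | h
    · omega
    · exfalso
      obtain ⟨c, hc⟩ := (padicValNat_dvd_iff_le hm0).mpr h
      exact hno c (hc ▸ hb)
  · intro m' hm' ⟨b', hb'⟩
    rw [hb'] at hm' ⊢
    rw [huniq b' b hm' hb]
  · intro m' hm' hne
    have hm'0 : m' ≠ 0 := by
      have := hm'.1; omega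
    by_contra hge
    push_neg at hge
    have : 2 ^ i ∣ m' := (padicValNat_dvd_iff_le hm'0).mpr hge
    obtain ⟨b', hb'⟩ := this
    exact hne (by rw [hb', huniq b' b (hb' ▸ hm') hb])
end

section
/- Let x, t1, t2 be natural numbers with x < t1 ≤ t2. Suppose g1 is an element of the interval (x, t1] whose 2-adic valuation is maximal among elements of (x, t1], and g2 is an element of (x, t2] whose 2-adic valuation is maximal among elements of (x, t2]. Then the 2-adic valuation of g1 is at most that of g2, and if g1 ≠ g2 then the 2-adic valuation of g1 is strictly less than that of g2. -/
lemma between_has_bigger_val {a b : ℕ} (ha : 0 < a) (hab : a < b)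
    (hval : padicValNat 2 a = padicValNat 2 b) :
    ∃ c, a < c ∧ c ≤ b ∧ padicValNat 2 a < padicValNat 2 c := by
  haveI : Fact (Nat.Prime 2) := ⟨Nat.prime_two⟩
  set v := padicValNat 2 a with hv
  have hb : 0 < b := ha.trans hab
  have hda : 2 ^ v ∣ a := pow_padicValNat_dvd
  have hdb : 2 ^ v ∣ b := hval ▸ pow_padicValNat_dvd
  obtain ⟨a', hae⟩ := hda
  obtain ⟨b', hbe⟩ := hdb
  have hodd : ¬ 2 ∣ a' := by
    rintro ⟨k, rfl⟩
    have hdvd : 2 ^ (v + 1) ∣ a := ⟨k, by rw [hae]; ring⟩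
    have := (padicValNat_dvd_iff_le (p := 2) ha.ne').mp hdvd
    omega
  refine ⟨2 ^ v * (a' + 1), ?_, ?_, ?_⟩
  · rw [hae]; exact Nat.mul_lt_mul_of_le_of_lt le_rfl (Nat.lt_succ_self _) (by positivity)
  · have : a' < b' := by
      rw [hae, hbe] at hab
      exact lt_of_mul_lt_mul_left hab (by positivity)
    rw [hbe]; exact Nat.mul_le_mul_left _ this
  · have h2 : 2 ∣ a' + 1 := by omega
    have : 2 ^ (v + 1) ∣ 2 ^ v * (a' + 1) := by
      obtain ⟨k, hk⟩ := h2
      exact ⟨k, by rw [hk]; ring⟩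
    have hne : 2 ^ v * (a' + 1) ≠ 0 := by positivity
    have := (padicValNat_dvd_iff_le (p := 2) hne).mp this
    omega

/-- Monotonicity of 2-fattest numbers of growing intervals: if `g1` is a
2-fattest number of `(x, t1]` and `g2` is a 2-fattest number of `(x, t2]`
with `t1 ≤ t2`, then the 2-adic valuation of `g1` is at most that of `g2`,
strictly so when `g1 ≠ g2`. -/
theorem two_fattest_monotone
    (x t1 t2 : ℕ) (hxt1 : x < t1) (ht12 : t1 ≤ t2)
    (g1 g2 : ℕ)
    (hg1 : g1 ∈ Set.Ioc x t1)
    (hg1max : ∀ m ∈ Set.Ioc x t1, padicValNat 2 m ≤ padicValNat 2 g1)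
    (hg2 : g2 ∈ Set.Ioc x t2)
    (hg2max : ∀ m ∈ Set.Ioc x t2, padicValNat 2 m ≤ padicValNat 2 g2) :
    padicValNat 2 g1 ≤ padicValNat 2 g2 ∧
      (g1 ≠ g2 → padicValNat 2 g1 < padicValNat 2 g2) := by
  obtain ⟨hg1l, hg1r⟩ := hg1
  obtain ⟨hg2l, hg2r⟩ := hg2
  have hle : padicValNat 2 g1 ≤ padicValNat 2 g2 :=
    hg2max g1 ⟨hg1l, hg1r.trans ht12⟩
  refine ⟨hle, fun hne => ?_⟩
  rcases hle.lt_or_eq with h | heq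
  · exact h
  exfalso
  rcases lt_or_gt_of_ne hne with h | h
  · obtain ⟨c, h1, h2, h3⟩ := between_has_bigger_val (by omega) h heq
    exact absurd (hg2max c ⟨hg1l.trans h1, h2.trans hg2r⟩) (by omega)
  · obtain ⟨c, h1, h2, h3⟩ := between_has_bigger_val (by omega) h heq.symm
    have := hg2max c ⟨hg2l.trans h1, h2.trans (hg1r.trans ht12)⟩
    omega
end

section
/- Let x and f be natural numbers with x + 1 < f, and suppose that every m in the interval (x, f] with m ≠ f has 2-adic valuation strictly smaller than the 2-adic valuation of f (i.e., f is the strict 2-fattest number of (x, f]). Consider the set G of all g such that for some t with x < t < f, g lies in (x, t] and the 2-adic valuation of g is maximal among elements of (x, t] (i.e., g is a 2-fattest number of some proper sub-interval (x, t] with t < f). Then every element of G has 2-adic valuation strictly less than that of f, and the cardinality of G is at most ⌊log₂(f − x)⌋. -/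
open Set

private def Gset (x f : ℕ) : Set ℕ :=
  {g : ℕ | ∃ t, x < t ∧ t < f ∧ g ∈ Set.Ioc x t ∧
      ∀ m ∈ Set.Ioc x t, padicValNat 2 m ≤ padicValNat 2 g}

private instance : Fact (Nat.Prime 2) := ⟨Nat.prime_two⟩

/-- if `2^v ∣ g` but not `2^(v+1)`, then `2^(v+1) ∣ g + 2^v`. -/
private lemma gadget {g v : ℕ} (h1 : 2 ^ v ∣ g) (h2 : ¬ 2 ^ (v + 1) ∣ g) :
    2 ^ (v + 1) ∣ g + 2 ^ v := by
  obtain ⟨a, rfl⟩ := h1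
  rcases Nat.even_or_odd a with he | ho
  · obtain ⟨c, rfl⟩ := he
    exact absurd ⟨c, by ring⟩ h2
  · obtain ⟨c, rfl⟩ := ho
    exact ⟨c + 1, by ring⟩

private lemma val_dvd {g : ℕ} : 2 ^ padicValNat 2 g ∣ g := pow_padicValNat_dvd

private lemma val_not_dvd {g : ℕ} (hg : g ≠ 0) : ¬ 2 ^ (padicValNat 2 g + 1) ∣ g :=
  pow_succ_padicValNat_not_dvd hg

private lemma le_val {g n : ℕ} (hg : g ≠ 0) (h : 2 ^ n ∣ g) : n ≤ padicValNat 2 g :=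
  (padicValNat_dvd_iff_le hg).mp h

/-- ordering lemma: smaller elements of Gset have strictly smaller valuation -/
private lemma Gset_strictMono {x f g h : ℕ} (hg : g ∈ Gset x f) (hh : h ∈ Gset x f)
    (hlt : g < h) : padicValNat 2 g < padicValNat 2 h := by
  obtain ⟨t, hxt, htf, ⟨hxh, hht⟩, hmax⟩ := hh
  obtain ⟨t', hxt', _, ⟨hxg, _⟩, _⟩ := hg
  have hg0 : g ≠ 0 := by omega
  have hh0 : h ≠ 0 := by omega
  have hle : padicValNat 2 g ≤ padicValNat 2 h := hmax g ⟨hxg, by omega⟩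
  rcases lt_or_eq_of_le hle with h' | heq
  · exact h'
  exfalso
  have hdg : 2 ^ padicValNat 2 g ∣ g := val_dvd
  have hdh : 2 ^ padicValNat 2 g ∣ h := heq ▸ (val_dvd (g := h))
  have hdvd : 2 ^ padicValNat 2 g ∣ h - g := Nat.dvd_sub hdh hdg
  have hpos : 2 ^ padicValNat 2 g ≤ h - g := Nat.le_of_dvd (by omega) hdvd
  -- m = g + 2^v is divisible by 2^(v+1)
  have hm : 2 ^ (padicValNat 2 g + 1) ∣ g + 2 ^ padicValNat 2 g :=
    gadget hdg (val_not_dvd hg0)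
  have hne : h - g ≠ 2 ^ padicValNat 2 g := by
    intro hE
    have hhe : h = g + 2 ^ padicValNat 2 g := by omega
    exact val_not_dvd hh0 (by rw [← heq, hhe]; exact hm)
  have hmlt : g + 2 ^ padicValNat 2 g < h := by omega
  have hmIoc : g + 2 ^ padicValNat 2 g ∈ Set.Ioc x t := ⟨by omega, by omega⟩
  have := hmax _ hmIoc
  have hge : padicValNat 2 g + 1 ≤ padicValNat 2 (g + 2 ^ padicValNat 2 g) :=
    le_val (by positivity) hm
  omega

/-- distance to x: any element of Gset is within 2^v of x -/
private lemma Gset_close {x f g : ℕ} (hg : g ∈ Gset x f) :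
    g ≤ x + 2 ^ padicValNat 2 g := by
  obtain ⟨t, hxt, htf, ⟨hxg, hgt⟩, hmax⟩ := hg
  by_contra hcon
  push_neg at hcon
  set v := padicValNat 2 g with hv
  have hg0 : g ≠ 0 := by omega
  have hdg : 2 ^ v ∣ g := val_dvd
  set m := g - 2 ^ v with hm
  have hm0 : m ≠ 0 := by omega
  have hdm : 2 ^ v ∣ m := Nat.dvd_sub hdg dvd_rfl
  have hmg : m + 2 ^ v = g := by omega
  have hmIoc : m ∈ Set.Ioc x t := ⟨by omega, by omega⟩
  by_cases hd : 2 ^ (v + 1) ∣ m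
  · have := le_val hm0 hd
    have := hmax m hmIoc
    omega
  · have hdvd2 := gadget hdm hd
    rw [hmg] at hdvd2
    exact val_not_dvd hg0 hdvd2

private lemma aux (x : ℕ) : ∀ f : ℕ, x + 1 < f →
    (∀ m ∈ Set.Ioc x f, m ≠ f → padicValNat 2 m < padicValNat 2 f) →
    (Gset x f).ncard ≤ Nat.log 2 (f - x) := by
  intro f
  induction f using Nat.strong_induction_on with
  | _ f IH =>
    intro hxf hfat
    have hfin : (Gset x f).Finite := by
      apply (Set.finite_Ioc x f).subset
      rintro g ⟨t, hxt, htf, ⟨hxg, hgt⟩, -⟩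
      exact ⟨hxg, by omega⟩
    rcases Set.eq_empty_or_nonempty (Gset x f) with hE | hne
    · simp [hE]
    obtain ⟨G, hGmem, hGmax⟩ := Set.exists_max_image (Gset x f) id hfin hne
    simp only [id] at hGmax
    obtain ⟨t, hxt, htf, ⟨hxG, hGt⟩, hmax⟩ := hGmem
    have hGf : G < f := by omega
    have hGG : G ∈ Gset x f := ⟨t, hxt, htf, ⟨hxG, hGt⟩, hmax⟩
    have hlog1 : 1 ≤ Nat.log 2 (f - x) := Nat.log_pos one_lt_two (by omega)
    by_cases hG1 : G ≤ x + 1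
    · -- Gset ⊆ {x+1}
      have hsub : Gset x f ⊆ {x + 1} := by
        rintro g ⟨t', hxt', ht'f, ⟨hxg, hgt'⟩, hmax'⟩
        have := hGmax g ⟨t', hxt', ht'f, ⟨hxg, hgt'⟩, hmax'⟩
        simp only [Set.mem_singleton_iff]
        omega
      calc (Gset x f).ncard ≤ ({x+1} : Set ℕ).ncard :=
            Set.ncard_le_ncard hsub (Set.finite_singleton _)
        _ = 1 := Set.ncard_singleton _
        _ ≤ _ := hlog1
    · push_neg at hG1
      -- new fattest hypothesis for interval (x, G]
      have hfat' : ∀ m ∈ Set.Ioc x G, m ≠ G → padicValNat 2 m < padicValNat 2 G := by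
        rintro m ⟨hxm, hmG⟩ hmne
        have hmG' : m < G := lt_of_le_of_ne hmG hmne
        -- take the fattest element of (x, m]
        have hfin2 : (Set.Ioc x m).Finite := Set.finite_Ioc x m
        obtain ⟨h, hhmem, hhmax⟩ := Set.exists_max_image (Set.Ioc x m)
          (padicValNat 2) hfin2 ⟨m, by constructor <;> omega⟩
        have hhG : h ∈ Gset x f := ⟨m, hxm, by omega, hhmem, hhmax⟩
        have hval : padicValNat 2 h < padicValNat 2 G := by
          apply Gset_strictMono hhG hGG
          have := hhmem.2
          omega
        have := hhmax m ⟨hxm, le_refl m⟩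
        omega
      -- set equality
      have hseteq : Gset x G = Gset x f \ {G} := by
        ext g
        constructor
        · rintro ⟨t', hxt', ht'G, hIoc, hmax'⟩
          refine ⟨⟨t', hxt', by omega, hIoc, hmax'⟩, ?_⟩
          simp only [Set.mem_singleton_iff]
          have := hIoc.2
          omega
        · rintro ⟨⟨t', hxt', ht'f, ⟨hxg, hgt'⟩, hmax'⟩, hne2⟩
          simp only [Set.mem_singleton_iff] at hne2
          have hgG : g < G := by
            have := hGmax g ⟨t', hxt', ht'f, ⟨hxg, hgt'⟩, hmax'⟩
            omega
          -- t' < G: otherwise G ∈ (x,t'] with bigger valuation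
          have ht'G : t' < G := by
            by_contra hcon
            push_neg at hcon
            have h1 := hmax' G ⟨hxG, hcon⟩
            have h2 := Gset_strictMono ⟨t', hxt', ht'f, ⟨hxg, hgt'⟩, hmax'⟩ hGG hgG
            omega
          exact ⟨t', hxt', ht'G, ⟨hxg, hgt'⟩, hmax'⟩
      -- valuation of G vs f
      have hvGf : padicValNat 2 G < padicValNat 2 f := hfat G ⟨hxG, by omega⟩ (by omega)
      set v := padicValNat 2 G with hv
      -- f - G ≥ 2^v
      have hdf : 2 ^ v ∣ f := dvd_trans (pow_dvd_pow 2 (le_of_lt hvGf)) val_dvd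
      have hdfG : 2 ^ v ∣ f - G := Nat.dvd_sub hdf val_dvd
      have hgap : 2 ^ v ≤ f - G := Nat.le_of_dvd (by omega) hdfG
      have hclose : G ≤ x + 2 ^ v := Gset_close hGG
      -- so f - x ≥ 2 * (G - x)
      have hdouble : (G - x) * 2 ≤ f - x := by omega
      have hIH := IH G hGf hG1 hfat'
      have hlog2 : Nat.log 2 (G - x) + 1 ≤ Nat.log 2 (f - x) := by
        rw [← Nat.log_mul_base one_lt_two (by omega : G - x ≠ 0)]
        exact Nat.log_mono_right hdouble
      have hcard : (Gset x f).ncard = (Gset x G).ncard + 1 := by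
        rw [hseteq, Set.ncard_diff_singleton_add_one hGG hfin]
      omega

/-- Bound on the number of pseudohandles: if `f` is the strict 2-fattest
number of the interval `(x, f]` (every other element has strictly smaller
2-adic valuation), then the set `G` of 2-fattest numbers of the proper
sub-intervals `(x, t]` with `x < t < f` consists of numbers of 2-adic
valuation strictly smaller than that of `f`, and has at most
`⌊log₂ (f - x)⌋` elements. -/
theorem pseudohandles_card_le
    (x f : ℕ) (hxf : x + 1 < f)
    (hfat : ∀ m ∈ Set.Ioc x f, m ≠ f → padicValNat 2 m < padicValNat 2 f) :
    (∀ g ∈ {g : ℕ | ∃ t, x < t ∧ t < f ∧ g ∈ Set.Ioc x t ∧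
        ∀ m ∈ Set.Ioc x t, padicValNat 2 m ≤ padicValNat 2 g},
      padicValNat 2 g < padicValNat 2 f) ∧
    ({g : ℕ | ∃ t, x < t ∧ t < f ∧ g ∈ Set.Ioc x t ∧
        ∀ m ∈ Set.Ioc x t, padicValNat 2 m ≤ padicValNat 2 g}).ncard ≤
      Nat.log 2 (f - x) := by
  constructor
  · rintro g ⟨t, hxt, htf, ⟨hxg, hgt⟩, -⟩
    exact hfat g ⟨hxg, by omega⟩ (by omega)
  · exact aux x f hxf hfat
end

section
/- Fix a binary string a and natural numbers t and M, and let b1, b2 be two distinct binary strings of length t each containing exactly one true bit. For a binary string b of length t define the finite set S(b) of binary strings consisting of a ++ (t+M zeros) together with all strings a ++ b ++ c where c ranges over all 2^M binary strings of length M. Then there exists a binary string p that is a prefix of some element of S(b1) and a prefix of some element of S(b2), and such that one of S(b1), S(b2) contains exactly 2^M + 1 elements having p as a prefix while the other contains exactly 1 element having p as a prefix. -/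
/-- The set `S(b)` of the lower-bound construction: the string
`a ++ 0^{t+M}` together with all strings `a ++ b ++ c` where `c` ranges over
the binary strings of length `M`. -/
def lowerBoundSet (a : List Bool) (t M : ℕ) (b : List Bool) :
    Finset (List Bool) :=
  insert (a ++ List.replicate (t + M) false)
    ((Finset.univ : Finset (Fin M → Bool)).image
      (fun c => a ++ b ++ List.ofFn c))

lemma weight_one_decomp : ∀ (b : List Bool), b.count true = 1 →
    ∃ j k, b = List.replicate j false ++ true :: List.replicate k false := by
  intro b
  induction b with
  | nil => simp
  | cons x l ih =>
    intro h
    cases x with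
    | true =>
      have h0 : l.count true = 0 := by simpa using h
      refine ⟨0, l.length, ?_⟩
      have hall : ∀ y ∈ l, y = false := by
        intro y hy
        cases y
        · rfl
        · exact absurd (List.count_pos_iff.2 hy) (by omega)
      simp only [List.replicate_zero, List.nil_append, List.cons.injEq, true_and]
      exact List.eq_replicate_of_mem hall
    | false =>
      have h1 : l.count true = 1 := by simpa using h
      obtain ⟨j, k, hjk⟩ := ih h1
      exact ⟨j + 1, k, by simp [hjk, List.replicate_succ]⟩

lemma key (a : List Bool) (t M : ℕ) (b1 b2 : List Bool)
    (hb1len : b1.length = t) (hb2len : b2.length = t)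
    (j1 k1 j2 k2 : ℕ)
    (hd1 : b1 = List.replicate j1 false ++ true :: List.replicate k1 false)
    (hd2 : b2 = List.replicate j2 false ++ true :: List.replicate k2 false)
    (hlt : j1 < j2) :
    ∃ p : List Bool,
      (∃ s ∈ lowerBoundSet a t M b1, p <+: s) ∧
      (∃ s ∈ lowerBoundSet a t M b2, p <+: s) ∧
      (((lowerBoundSet a t M b1).filter (fun s => p <+: s)).card = 1 ∧
        ((lowerBoundSet a t M b2).filter (fun s => p <+: s)).card = 2 ^ M + 1) := by
  have ht2 : j2 < t := by
    have := hb2len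
    rw [hd2] at this
    simp at this
    omega
  set x : List Bool := a ++ List.replicate (t + M) false with hx
  set p : List Bool := a ++ List.replicate (j1 + 1) false with hp
  have hrep : ∀ n, j1 + 1 ≤ n →
      List.replicate (j1 + 1) false <+: List.replicate n false := by
    intro n hn
    exact ⟨List.replicate (n - (j1 + 1)) false, by
      rw [← List.replicate_add]; congr 1; omega⟩
  -- p is a prefix of x
  have hpx : p <+: x := by
    rw [hp, hx, List.prefix_append_right_inj]
    exact hrep _ (by omega)
  -- p is a prefix of a ++ b2 ++ c for every c
  have hpb2 : ∀ c : List Bool, p <+: a ++ b2 ++ c := by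
    intro c
    rw [List.append_assoc, hp, List.prefix_append_right_inj]
    refine (hrep j2 (by omega)).trans ?_
    rw [hd2, List.append_assoc]
    exact List.prefix_append _ _
  -- p is not a prefix of a ++ b1 ++ c
  have hnpb1 : ∀ c : List Bool, ¬ p <+: a ++ b1 ++ c := by
    intro c h
    rw [List.append_assoc, hp, List.prefix_append_right_inj, hd1,
      List.append_assoc, List.replicate_succ', List.prefix_append_right_inj] at h
    obtain ⟨r, hr⟩ := h
    simpa using congrArg List.head? hr
  -- x is not in the image set
  have hxnotmem : ∀ c : Fin M → Bool, x ≠ a ++ b2 ++ List.ofFn c := by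
    intro c hc
    rw [hx, List.append_assoc] at hc
    have h2 := List.append_cancel_left hc
    have hcount := congrArg (List.count true) h2
    simp [hd2, List.count_append, List.count_replicate] at hcount
  have hxnotmem1 : ∀ c : Fin M → Bool, x ≠ a ++ b1 ++ List.ofFn c := by
    intro c hc
    rw [hx, List.append_assoc] at hc
    have h2 := List.append_cancel_left hc
    have hcount := congrArg (List.count true) h2
    simp [hd1, List.count_append, List.count_replicate] at hcount
  have hinj : ∀ b : List Bool,
      Function.Injective (fun c : Fin M → Bool => a ++ b ++ List.ofFn c) := by
    intro b c1 c2 h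
    exact List.ofFn_injective (List.append_cancel_left h)
  -- filter on the b1 side
  have hf1 : (lowerBoundSet a t M b1).filter (fun s => p <+: s) = insert x ∅ := by
    unfold lowerBoundSet
    rw [Finset.filter_insert, if_pos hpx, Finset.filter_false_of_mem]
    intro s hs
    simp only [Finset.mem_image, Finset.mem_univ, true_and] at hs
    obtain ⟨c, rfl⟩ := hs
    exact hnpb1 _
  -- filter on the b2 side
  have hf2 : (lowerBoundSet a t M b2).filter (fun s => p <+: s)
      = lowerBoundSet a t M b2 := by
    apply Finset.filter_true_of_mem
    intro s hs
    unfold lowerBoundSet at hs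
    simp only [Finset.mem_insert, Finset.mem_image, Finset.mem_univ, true_and] at hs
    rcases hs with rfl | ⟨c, rfl⟩
    · exact hpx
    · exact hpb2 _
  refine ⟨p, ⟨x, ?_, hpx⟩, ⟨x, ?_, hpx⟩, ?_, ?_⟩
  · exact Finset.mem_insert_self _ _
  · exact Finset.mem_insert_self _ _
  · rw [hf1]; simp
  · rw [hf2]
    unfold lowerBoundSet
    rw [Finset.card_insert_of_notMem, Finset.card_image_of_injective _ (hinj b2)]
    · simp
    · simp only [Finset.mem_image, Finset.mem_univ, true_and, not_exists]
      intro c hc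
      exact hxnotmem c hc.symm

/-- Distinguishing claim of the space lower bound (Theorem 7): if `b1 ≠ b2`
are strings of length `t` of Hamming weight one, then there is a string `p`
that is a prefix of some element of `S(b1)` and of some element of `S(b2)`,
such that one of `S(b1)`, `S(b2)` has exactly `2^M + 1` elements with prefix
`p` while the other has exactly one. -/
theorem lowerBound_distinguishing
    (a : List Bool) (t M : ℕ) (b1 b2 : List Bool)
    (hb1len : b1.length = t) (hb2len : b2.length = t)
    (hb1w : b1.count true = 1) (hb2w : b2.count true = 1)
    (hne : b1 ≠ b2) :
    ∃ p : List Bool,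
      (∃ s ∈ lowerBoundSet a t M b1, p <+: s) ∧
      (∃ s ∈ lowerBoundSet a t M b2, p <+: s) ∧
      ((((lowerBoundSet a t M b1).filter (fun s => p <+: s)).card = 2 ^ M + 1 ∧
        ((lowerBoundSet a t M b2).filter (fun s => p <+: s)).card = 1) ∨
       (((lowerBoundSet a t M b1).filter (fun s => p <+: s)).card = 1 ∧
        ((lowerBoundSet a t M b2).filter (fun s => p <+: s)).card = 2 ^ M + 1)) := by
  obtain ⟨j1, k1, hd1⟩ := weight_one_decomp b1 hb1w
  obtain ⟨j2, k2, hd2⟩ := weight_one_decomp b2 hb2w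
  rcases lt_trichotomy j1 j2 with h | h | h
  · obtain ⟨p, h1, h2, h3⟩ := key a t M b1 b2 hb1len hb2len j1 k1 j2 k2 hd1 hd2 h
    exact ⟨p, h1, h2, Or.inr h3⟩
  · exfalso
    apply hne
    subst h
    have hk : k1 = k2 := by
      have hh := hb1len.trans hb2len.symm
      rw [hd1, hd2] at hh
      simpa using hh
    rw [hd1, hd2, hk]
  · obtain ⟨p, h1, h2, h3⟩ := key a t M b2 b1 hb2len hb1len j2 k2 j1 k1 hd2 hd1 h
    exact ⟨p, h2, h1, Or.inl ⟨h3.2, h3.1⟩⟩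
end

section
/- Fix natural numbers L, t ≥ 1, M, and e with 2·e < 2^M. Let A be the set of all binary strings of length L and let W be the set of all binary strings of length t containing exactly one true bit. For a function f : A → W define the finite set S(f) of binary strings consisting of all strings a ++ (t+M zeros) for a ∈ A, together with all strings a ++ f(a) ++ c for a ∈ A and c a binary string of length M. Suppose enc maps each function f : A → W to a binary string, and dec maps a pair of binary strings to a natural number, such that for every f : A → W and every binary string p that is a prefix of some element of S(f), the value dec(enc(f), p) differs from the number of elements of S(f) having p as a prefix by at most e. Then there exists f : A → W such that t^{2^L} ≤ 2^{|enc(f)| + 1} − 1; in particular some encoding has length at least 2^L · log₂ t − 1 bits. -/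
/-- The set `S(f)` of the lower-bound construction: identifying binary strings
of length `L` with functions `Fin L → Bool`, it consists of the strings
`a ++ 0^{t+M}` for all `a` of length `L`, together with all strings
`a ++ f(a) ++ c` for `a` of length `L` and `c` of length `M`. -/
def approxCountSet (L t M : ℕ) (f : (Fin L → Bool) → List Bool) :
    Finset (List Bool) :=
  ((Finset.univ : Finset (Fin L → Bool)).image
      (fun a => List.ofFn a ++ List.replicate (t + M) false)) ∪
  ((Finset.univ : Finset ((Fin L → Bool) × (Fin M → Bool))).image
      (fun ac => List.ofFn ac.1 ++ f ac.1 ++ List.ofFn ac.2))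

/-! A query `a ++ 0^(i+1)` is always valid, since it is a prefix of the padding string
`a ++ 0^(t+M)`. It is matched by the padding string alone when the one of `f(a)` sits at
position `i`, but additionally by all `2^M` codewords `a ++ f(a) ++ c` when that one sits
further right. An additive error `e < 2^M / 2` cannot blur this gap, so the encoding is
injective on the `t^(2^L)` choices of positions, whereas only `2^(N+1) - 1` binary strings have
length at most `N`. -/

open Finset

theorem Fintype.card_le_sum_pow_of_injective_of_length_le {α β : Type*} [Fintype α]
    [Fintype β] {G : α → List β} (hG : Function.Injective G) {N : ℕ}
    (hN : ∀ x, (G x).length ≤ N) :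
    Fintype.card α ≤ ∑ k ∈ range (N + 1), Fintype.card β ^ k := by
  classical
  let lists (k : ℕ) : Finset (List β) := univ.image (List.Vector.toList (α := β) (n := k))
  calc Fintype.card α ≤ ((range (N + 1)).biUnion lists).card :=
        card_le_card_of_injOn G (fun x _ => by
          simp only [lists, coe_biUnion, coe_range, Set.mem_Iio, coe_image, coe_univ,
            Set.image_univ, Set.mem_iUnion, Set.mem_range]
          exact ⟨_, Nat.lt_succ_of_le (hN x), ⟨G x, rfl⟩, rfl⟩) hG.injOn
    _ ≤ ∑ k ∈ range (N + 1), (lists k).card := card_biUnion_le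
    _ ≤ ∑ k ∈ range (N + 1), Fintype.card β ^ k :=
        sum_le_sum fun k _ => card_image_le.trans (card_vector k).le

theorem Fintype.card_le_two_pow_succ_sub_one_of_injective_of_length_le {α : Type*} [Fintype α]
    {G : α → List Bool} (hG : Function.Injective G) {N : ℕ} (hN : ∀ x, (G x).length ≤ N) :
    Fintype.card α ≤ 2 ^ (N + 1) - 1 := by
  simpa [Nat.geomSum_eq le_rfl] using Fintype.card_le_sum_pow_of_injective_of_length_le hG hN

theorem List.append_prefix_append_iff_of_length_eq {α : Type*} {x y u v : List α}
    (h : x.length = y.length) : x ++ u <+: y ++ v ↔ x = y ∧ u <+: v := by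
  constructor
  · intro hp
    have hxy : x = y :=
      ((isPrefix_append_of_length h.le).1 ((prefix_append x u).trans hp)).eq_of_length h
    subst hxy
    exact ⟨rfl, (prefix_append_right_inj x).1 hp⟩
  · rintro ⟨rfl, huv⟩
    exact (prefix_append_right_inj x).2 huv

theorem List.replicate_prefix_replicate {α : Type*} {m n : ℕ} (a : α) (h : m ≤ n) :
    List.replicate m a <+: List.replicate n a := by
  rw [← Nat.add_sub_cancel' h, List.replicate_add]
  exact List.prefix_append _ _

section approxCountSet

variable {L t M : ℕ} {f : (Fin L → Bool) → List Bool} {a : Fin L → Bool} {w : List Bool}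

theorem filter_prefix_image_padding (hw : w <+: List.replicate (t + M) false) :
    (univ.image fun a' : Fin L → Bool => List.ofFn a' ++ List.replicate (t + M) false).filter
        (List.ofFn a ++ w <+: ·) = {List.ofFn a ++ List.replicate (t + M) false} := by
  ext s
  simp only [mem_filter, mem_image, mem_univ, true_and, mem_singleton]
  constructor
  · rintro ⟨⟨a', rfl⟩, hp⟩
    rw [List.append_prefix_append_iff_of_length_eq (by simp)] at hp
    rw [List.ofFn_injective hp.1]
  · rintro rfl
    exact ⟨⟨a, rfl⟩, List.prefix_append_right_inj _ |>.2 hw⟩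

theorem ofFn_append_prefix_ofFn_append_iff {a' : Fin L → Bool} {u : List Bool}
    (hw : w.length ≤ (f a).length) :
    List.ofFn a ++ w <+: List.ofFn a' ++ (f a' ++ u) ↔ a = a' ∧ w <+: f a := by
  rw [List.append_prefix_append_iff_of_length_eq (by simp), List.ofFn_inj]
  constructor
  · rintro ⟨rfl, h⟩
    exact ⟨rfl, (List.isPrefix_append_of_length hw).1 h⟩
  · rintro ⟨rfl, h⟩
    exact ⟨rfl, h.trans (List.prefix_append _ _)⟩

theorem filter_prefix_image_codewords (hw : w.length ≤ (f a).length) :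
    (univ.image fun ac : (Fin L → Bool) × (Fin M → Bool) =>
        List.ofFn ac.1 ++ f ac.1 ++ List.ofFn ac.2).filter (List.ofFn a ++ w <+: ·) =
      if w <+: f a then univ.image fun c : Fin M → Bool => List.ofFn a ++ f a ++ List.ofFn c
      else ∅ := by
  ext s
  simp only [mem_filter, mem_image, mem_univ, true_and, Prod.exists, List.append_assoc]
  split_ifs with hfa
  · simp only [mem_image, mem_univ, true_and]
    constructor
    · rintro ⟨⟨a', c, rfl⟩, hp⟩
      obtain ⟨rfl, -⟩ := (ofFn_append_prefix_ofFn_append_iff hw).1 hp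
      exact ⟨c, rfl⟩
    · rintro ⟨c, rfl⟩
      exact ⟨⟨a, c, rfl⟩, (ofFn_append_prefix_ofFn_append_iff hw).2 ⟨rfl, hfa⟩⟩
  · simp only [notMem_empty, iff_false, not_and]
    rintro ⟨a', c, rfl⟩ hp
    exact hfa ((ofFn_append_prefix_ofFn_append_iff hw).1 hp).2

theorem card_filter_prefix_approxCountSet (hlen : (f a).length = t) (hone : true ∈ f a)
    (hw : w <+: List.replicate (t + M) false) (hwt : w.length ≤ t) :
    ((approxCountSet L t M f).filter (List.ofFn a ++ w <+: ·)).card =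
      1 + if w <+: f a then 2 ^ M else 0 := by
  rw [approxCountSet, filter_union, filter_prefix_image_padding hw,
    filter_prefix_image_codewords (hlen ▸ hwt)]
  split_ifs
  · have hcodewords_injective : Function.Injective
        fun c : Fin M → Bool => List.ofFn a ++ f a ++ List.ofFn c :=
      fun c c' h => List.ofFn_injective (List.append_cancel_left h)
    have hpadding_not_codeword : List.ofFn a ++ List.replicate (t + M) false ∉
        univ.image fun c : Fin M → Bool => List.ofFn a ++ f a ++ List.ofFn c := by
      simp only [mem_image, mem_univ, true_and, List.append_assoc, List.append_cancel_left_eq,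
        not_exists]
      intro c hc
      have := List.mem_append_left (List.ofFn c) hone
      rw [hc] at this
      simp at this
    rw [card_union_of_disjoint (disjoint_singleton_left.2 hpadding_not_codeword),
      card_image_of_injective _ hcodewords_injective]
    simp
  · simp

end approxCountSet

theorem ofFn_append_replicate_mem_approxCountSet {L t M : ℕ} (f : (Fin L → Bool) → List Bool)
    (a : Fin L → Bool) : List.ofFn a ++ List.replicate (t + M) false ∈ approxCountSet L t M f :=
  mem_union_left _ (mem_image_of_mem _ (mem_univ a))

def unitString (t i : ℕ) : List Bool :=
  List.replicate i false ++ true :: List.replicate (t - i - 1) false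

section unitString

variable {t i : ℕ}

theorem length_unitString (h : i < t) : (unitString t i).length = t := by
  simp only [unitString, List.length_append, List.length_replicate, List.length_cons]
  omega

theorem count_true_unitString : (unitString t i).count true = 1 := by
  simp [unitString, List.count_replicate]

theorem true_mem_unitString : true ∈ unitString t i := by
  simp [unitString]

theorem replicate_prefix_unitString {m : ℕ} (h : m ≤ i) :
    List.replicate m false <+: unitString t i :=
  (List.replicate_prefix_replicate false h).trans (List.prefix_append _ _)

theorem not_replicate_succ_prefix_unitString :
    ¬ List.replicate (i + 1) false <+: unitString t i := by
  rw [unitString, List.replicate_succ', List.prefix_append_right_inj]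
  simp

end unitString

def IsApproxPrefixCounter (L t M e : ℕ) (enc : ((Fin L → Bool) → List Bool) → List Bool)
    (dec : List Bool → List Bool → ℕ) : Prop :=
  ∀ f : (Fin L → Bool) → List Bool,
    (∀ a, (f a).length = t ∧ (f a).count true = 1) →
    ∀ p : List Bool, (∃ s ∈ approxCountSet L t M f, p <+: s) →
      ((dec (enc f) p : ℤ) -
        (((approxCountSet L t M f).filter (fun s => p <+: s)).card : ℤ)).natAbs ≤ e

section distinguish

variable {L t M e : ℕ} {enc : ((Fin L → Bool) → List Bool) → List Bool}
  {dec : List Bool → List Bool → ℕ}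

theorem enc_unitString_ne_of_lt (he : 2 * e < 2 ^ M)
    (hdec : IsApproxPrefixCounter L t M e enc dec)
    {j j' : (Fin L → Bool) → Fin t} {a : Fin L → Bool} (hlt : j a < j' a) :
    (enc fun a => unitString t (j a)) ≠ enc fun a => unitString t (j' a) := by
  intro henc
  set p := List.ofFn a ++ List.replicate (j a + 1) false
  have hvalid : ∀ k : (Fin L → Bool) → Fin t, ∀ a,
      (unitString t (k a)).length = t ∧ (unitString t (k a)).count true = 1 :=
    fun k a => ⟨length_unitString (k a).2, count_true_unitString⟩
  have hcount (k : (Fin L → Bool) → Fin t) :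
      ((approxCountSet L t M fun a => unitString t (k a)).filter (p <+: ·)).card =
        1 + if List.replicate (j a + 1) false <+: unitString t (k a) then 2 ^ M else 0 :=
    card_filter_prefix_approxCountSet (length_unitString (k a).2) true_mem_unitString
      (List.replicate_prefix_replicate false (by omega)) (by simp)
  have hquery (k : (Fin L → Bool) → Fin t) :
      ∃ s ∈ approxCountSet L t M (fun a => unitString t (k a)), p <+: s :=
    ⟨_, ofFn_append_replicate_mem_approxCountSet _ a,
      (List.prefix_append_right_inj _).2 (List.replicate_prefix_replicate false (by omega))⟩
  have hj := hdec _ (hvalid j) p (hquery j)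
  have hj' := hdec _ (hvalid j') p (hquery j')
  rw [hcount, if_neg not_replicate_succ_prefix_unitString] at hj
  rw [hcount, if_pos (replicate_prefix_unitString hlt), ← henc] at hj'
  omega

theorem enc_unitString_injective (he : 2 * e < 2 ^ M)
    (hdec : IsApproxPrefixCounter L t M e enc dec) :
    Function.Injective fun j : (Fin L → Bool) → Fin t => enc fun a => unitString t (j a) := by
  intro j j' henc
  funext a
  by_contra hne
  rcases Fin.lt_or_lt_of_ne hne with hlt | hlt
  · exact enc_unitString_ne_of_lt he hdec hlt henc
  · exact enc_unitString_ne_of_lt he hdec hlt henc.symm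

end distinguish

/-- Deterministic encoder/decoder formulation of the space lower bound
(Theorem 7): any data structure answering prefix-count queries on the sets
`S(f)` with additive error at most `e < 2^M / 2` must, on some valid `f`
(mapping each length-`L` string to a length-`t` string of Hamming weight
one), use an encoding of length at least `log₂(t^{2^L} + 1) - 1` bits. -/
theorem approx_prefix_count_space_lower_bound
    (L t M e : ℕ) (ht : 1 ≤ t) (he : 2 * e < 2 ^ M)
    (enc : ((Fin L → Bool) → List Bool) → List Bool)
    (dec : List Bool → List Bool → ℕ)
    (hdec : ∀ f : (Fin L → Bool) → List Bool,
      (∀ a, (f a).length = t ∧ (f a).count true = 1) →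
      ∀ p : List Bool, (∃ s ∈ approxCountSet L t M f, p <+: s) →
        ((dec (enc f) p : ℤ) -
          (((approxCountSet L t M f).filter (fun s => p <+: s)).card : ℤ)).natAbs
          ≤ e) :
    ∃ f : (Fin L → Bool) → List Bool,
      (∀ a, (f a).length = t ∧ (f a).count true = 1) ∧
      t ^ (2 ^ L) ≤ 2 ^ ((enc f).length + 1) - 1 := by
  have : Nonempty ((Fin L → Bool) → Fin t) := ⟨fun _ => ⟨0, ht⟩⟩
  obtain ⟨j, hj⟩ := Finite.exists_max fun j : (Fin L → Bool) → Fin t =>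
    (enc fun a => unitString t (j a)).length
  refine ⟨fun a => unitString t (j a),
    fun a => ⟨length_unitString (j a).2, count_true_unitString⟩, ?_⟩
  calc t ^ 2 ^ L = Fintype.card ((Fin L → Bool) → Fin t) := by simp
    _ ≤ 2 ^ ((enc fun a => unitString t (j a)).length + 1) - 1 :=
      Fintype.card_le_two_pow_succ_sub_one_of_injective_of_length_le
        (enc_unitString_injective he hdec) hj
end
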